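/- arXiv:2308.06104 — 2 statements merged into one kernel-verified Lean document; each statement's English description precedes it below -/
import Mathlib

section
/- Let R be a DGA over A, I : R → R an A-linear degree-preserving map with I(1) = 1, I∘∂ = ∂∘I, and I(ab) = (−1)^{|a||b|} I(b)I(a) for homogeneous a, b, and F a DG right R-module. Let F^left be the DG left R-module with the same underlying complex as F and left action a·f := (−1)^{|a||f|} f·(I(a)) (this is indeed a DG left R-module). Let C_• be a free graded A-module with finite basis B (degrees ≥ 0), (m_{x,y}) a twisting cocycle for (R, C_•), M := R⊗_A C_• the DG left R-module with twisted differential ∂_M(a⊗x) = ∂a⊗x + (−1)^{|a|} Σ_y (a m_{x,y})⊗y and action b·(a⊗x) = (ba)⊗x, and set n_{y,x} := (−1)^{|x||y|+|x|+1} I(m_{x,y}). Let Hom_R(M, F^left) be the complex whose degree-d part (d ∈ ℤ, homological convention) consists of the A-linear maps ℓ : M → F with ℓ(M_i) ⊆ F_{i+d} and ℓ(a·ξ) = (−1)^{d|a|} a·ℓ(ξ) (action in F^left), with differential δℓ := ∂∘ℓ − (−1)^d ℓ∘∂_M; and let C^* be the cohomological twisted complex whose degree-k part is spanned by the elements f̄⊗y∨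 with f ∈ F homogeneous, y ∈ B and |y| − |f| = k, with degree +1 differential d(f̄⊗y∨) = (∂f)¯⊗y∨ + (−1)^{|f|} Σ_{x∈B} (f·n_{y,x})¯ ⊗ x∨. Then the map Φ(f̄⊗y∨) := (−1)^{|y|} ℓ_{f,y}, where ℓ_{f,y} is the unique graded R-linear map M → F^left of degree |f|−|y| with ℓ_{f,y}(1⊗y) = f and ℓ_{f,y}(1⊗x) = 0 for all x ≠ y, identifies C^k bijectively with the degree −k part of Hom_R(M, F^left) and satisfies δ∘Φ = Φ∘d; i.e. Φ is an isomorphism of complexes. -/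
/-!
Everything is computed on the generators `a ⊗ x` of `M`, `a ∈ R` homogeneous, on which
`Φ(g)(a ⊗ x) = ±(g x) · I(a)` is forced. Because `I` reverses products up to the Koszul sign,
this formula is graded `R`-linear for the twisted action of `F^left`, and conversely a graded
`R`-linear `ℓ` is recovered from its values `ℓ(1 ⊗ x)`. The chain-map identity is a comparison of
signs in which the twisting term `∑ y, (a m_{x,y}) ⊗ y` of `∂_M` becomes the term
`f · n_{y,x}` of `d`, through `I(a m_{x,y}) = ± I(m_{x,y}) I(a)`.
-/

/-- `PhiChar ℛ act I deg ℓ g` says that the `A`-linear map `ℓ : R ⊗ C → F` is the image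
`Φ(g)` of the cochain `g = ∑ y (g y) ⊗ y∨` under the map
`Φ(f̄ ⊗ y∨) = (-1)^{|y|} ℓ_{f,y}`, i.e.
`ℓ (a ⊗ x) = (-1)^{|x| + |a||x|} (g x) · I(a)` for homogeneous `a`. -/
def PhiChar {A : Type*} [CommRing A] {R : Type*} [Ring R] [Algebra A R]
    {F : Type*} [AddCommGroup F] [Module A F] {B : Type*} [DecidableEq B]
    (ℛ : ℤ → Submodule A R) (act : F →ₗ[A] R →ₗ[A] F) (I : R →ₗ[A] R)
    (deg : B → ℤ) (ℓ : (B → R) →ₗ[A] F) (g : B → F) : Prop :=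
  ∀ i : ℤ, ∀ a ∈ ℛ i, ∀ x : B,
    ℓ (Pi.single x a) = (Int.negOnePow (deg x + i * deg x) : ℤ) • act (g x) (I a)

namespace Int

variable {M : Type*} [AddCommGroup M]

lemma negOnePow_smul_negOnePow_smul (m n : ℤ) (v : M) :
    (m.negOnePow : ℤ) • (n.negOnePow : ℤ) • v = ((m + n).negOnePow : ℤ) • v := by
  rw [smul_smul, ← Units.val_mul, ← negOnePow_add]

lemma negOnePow_smul_eq_of_even {m n : ℤ} (h : Even (m - n)) (v : M) :
    (m.negOnePow : ℤ) • v = (n.negOnePow : ℤ) • v := by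
  rw [(negOnePow_eq_iff m n).2 h]

lemma negOnePow_smul_eq_neg_of_odd {m n : ℤ} (h : Odd (m - n)) (v : M) :
    (m.negOnePow : ℤ) • v = -((n.negOnePow : ℤ) • v) := by
  rw [← sub_add_cancel m n, negOnePow_add, negOnePow_odd _ h, Units.val_mul, mul_smul]
  simp

end Int

lemma Pi.single_one_mem_graded {A R B : Type*} [CommRing A] [Ring R] [Algebra A R]
    (ℛ : ℤ → Submodule A R) [GradedRing ℛ] [DecidableEq B] (deg : B → ℤ) (x y : B) :
    (Pi.single x (1 : R) : B → R) y ∈ ℛ (deg x - deg y) := by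
  by_cases h : y = x
  · subst h
    simpa using SetLike.one_mem_graded ℛ
  · simp [Pi.single_eq_of_ne h]

section

variable {A : Type*} [CommRing A] {R : Type*} [Ring R] [Algebra A R] {ℛ : ℤ → Submodule A R}
  {F : Type*} [AddCommGroup F] [Module A F] {ℱ : ℤ → Submodule A F}
  {act : F →ₗ[A] R →ₗ[A] F} {I : R →ₗ[A] R}

theorem twistedLeftAction_mul
    (hI_mul : ∀ (i j : ℤ), ∀ a ∈ ℛ i, ∀ b ∈ ℛ j,
      I (a * b) = (Int.negOnePow (i * j) : ℤ) • (I b * I a))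
    (hact_mul : ∀ (f : F) (a b : R), act (act f a) b = act f (a * b))
    {i₁ i₂ : ℤ} (j : ℤ) {a b : R} (ha : a ∈ ℛ i₁) (hb : b ∈ ℛ i₂) (f : F) :
    (Int.negOnePow (i₁ * (i₂ + j) + i₂ * j) : ℤ) • act (act f (I b)) (I a) =
      (Int.negOnePow ((i₁ + i₂) * j) : ℤ) • act f (I (a * b)) := by
  rw [hI_mul i₁ i₂ a ha b hb, map_zsmul, ← hact_mul, Int.negOnePow_smul_negOnePow_smul]
  exact Int.negOnePow_smul_eq_of_even ⟨0, by ring⟩ _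

theorem twistedLeftAction_leibniz {d : R →ₗ[A] R} {dF : F →ₗ[A] F}
    (hI_d : ∀ a : R, I (d a) = d (I a))
    (hact_leibniz : ∀ i : ℤ, ∀ f ∈ ℱ i, ∀ a : R,
      dF (act f a) = act (dF f) a + (Int.negOnePow i : ℤ) • act f (d a))
    (i : ℤ) {j : ℤ} (a : R) {f : F} (hf : f ∈ ℱ j) :
    dF ((Int.negOnePow (i * j) : ℤ) • act f (I a)) =
      (Int.negOnePow ((i - 1) * j) : ℤ) • act f (I (d a)) +
        (Int.negOnePow (i + i * (j - 1)) : ℤ) • act (dF f) (I a) := by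
  rw [map_zsmul, hact_leibniz j f hf, ← hI_d, smul_add, Int.negOnePow_smul_negOnePow_smul,
    add_comm]
  congr 1
  · exact Int.negOnePow_smul_eq_of_even ⟨j, by ring⟩ _
  · exact Int.negOnePow_smul_eq_of_even ⟨0, by ring⟩ _

variable {B : Type*} [DecidableEq B] {deg : B → ℤ} {ℓ : (B → R) →ₗ[A] F} {g : B → F}

theorem PhiChar.of_map_smul [GradedRing ℛ]
    (hlin : ∀ i : ℤ, ∀ a ∈ ℛ i, ∀ j : ℤ, ∀ c : B → R, (∀ x : B, c x ∈ ℛ (j - deg x)) →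
      ℓ (a • c) = (Int.negOnePow (i * j) : ℤ) • act (ℓ c) (I a)) :
    PhiChar ℛ act I deg ℓ fun x => (Int.negOnePow (deg x) : ℤ) • ℓ (Pi.single x 1) := by
  intro i a ha x
  have hsingle : (Pi.single x a : B → R) = a • Pi.single x (1 : R) := by
    rw [← Pi.single_smul', smul_eq_mul, mul_one]
  rw [hsingle, hlin i a ha (deg x) _ (Pi.single_one_mem_graded ℛ deg x), map_zsmul,
    LinearMap.smul_apply, Int.negOnePow_smul_negOnePow_smul]
  exact Int.negOnePow_smul_eq_of_even ⟨-deg x, by ring⟩ _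

theorem PhiChar.apply_single_one [GradedRing ℛ] (hI_one : I 1 = 1) (hact_one : ∀ f : F, act f 1 = f)
    (hℓ : PhiChar ℛ act I deg ℓ g) (x : B) :
    ℓ (Pi.single x 1) = (Int.negOnePow (deg x) : ℤ) • g x := by
  rw [hℓ 0 1 (SetLike.one_mem_graded ℛ) x, hI_one, hact_one, zero_mul, add_zero]

theorem PhiChar.eq_negOnePow_smul_apply_single_one [GradedRing ℛ] (hI_one : I 1 = 1)
    (hact_one : ∀ f : F, act f 1 = f) (hℓ : PhiChar ℛ act I deg ℓ g) (x : B) :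
    g x = (Int.negOnePow (deg x) : ℤ) • ℓ (Pi.single x 1) := by
  rw [hℓ.apply_single_one hI_one hact_one, Int.negOnePow_smul_negOnePow_smul,
    Int.negOnePow_smul_eq_of_even (n := 0) ⟨deg x, by ring⟩, Int.negOnePow_zero, Units.val_one,
    one_smul]

variable [Fintype B]

theorem PhiChar.ext [DirectSum.Decomposition ℛ] {ℓ' : (B → R) →ₗ[A] F}
    (hℓ : PhiChar ℛ act I deg ℓ g) (hℓ' : PhiChar ℛ act I deg ℓ' g) : ℓ = ℓ' := by
  refine LinearMap.pi_ext fun x r => ?_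
  induction r using DirectSum.Decomposition.inductionOn ℛ with
  | zero => simp
  | add a b ha hb => rw [Pi.single_add, map_add, map_add, ha, hb]
  | homogeneous a => rw [hℓ _ _ a.2, hℓ' _ _ a.2]

theorem PhiChar.apply_eq_sum (hℓ : PhiChar ℛ act I deg ℓ g) {j : ℤ} {c : B → R}
    (hc : ∀ y, c y ∈ ℛ (j - deg y)) :
    ℓ c = ∑ y, (Int.negOnePow (j * deg y) : ℤ) • act (g y) (I (c y)) := by
  conv_lhs => rw [← Finset.univ_sum_single c]
  rw [map_sum]
  refine Finset.sum_congr rfl fun y _ => ?_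
  rw [hℓ _ _ (hc y)]
  refine Int.negOnePow_smul_eq_of_even ?_ _
  rw [show deg y + (j - deg y) * deg y - j * deg y = -(deg y * (deg y - 1)) by ring]
  exact (Int.even_mul_pred_self _).neg

theorem PhiChar.apply_mem (hI_deg : ∀ i : ℤ, ∀ a ∈ ℛ i, I a ∈ ℛ i)
    (hact_mem : ∀ (i j : ℤ), ∀ f ∈ ℱ i, ∀ a ∈ ℛ j, act f a ∈ ℱ (i + j))
    (hℓ : PhiChar ℛ act I deg ℓ g) {k : ℤ} (hg : ∀ y, g y ∈ ℱ (deg y - k))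
    {i : ℤ} {c : B → R} (hc : ∀ x, c x ∈ ℛ (i - deg x)) : ℓ c ∈ ℱ (i - k) := by
  rw [hℓ.apply_eq_sum hc]
  refine Submodule.sum_mem _ fun y _ => zsmul_mem ?_ _
  convert hact_mem _ _ _ (hg y) _ (hI_deg _ _ (hc y)) using 2
  ring

theorem PhiChar.apply_smul [GradedRing ℛ]
    (hI_mul : ∀ (i j : ℤ), ∀ a ∈ ℛ i, ∀ b ∈ ℛ j,
      I (a * b) = (Int.negOnePow (i * j) : ℤ) • (I b * I a))
    (hact_mul : ∀ (f : F) (a b : R), act (act f a) b = act f (a * b))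
    (hℓ : PhiChar ℛ act I deg ℓ g) {i j : ℤ} {a : R} (ha : a ∈ ℛ i) {c : B → R}
    (hc : ∀ x, c x ∈ ℛ (j - deg x)) :
    ℓ (a • c) = (Int.negOnePow (i * j) : ℤ) • act (ℓ c) (I a) := by
  have hac : ∀ x, (a • c) x ∈ ℛ (i + j - deg x) := fun x => by
    rw [add_sub_assoc]
    exact SetLike.mul_mem_graded ha (hc x)
  rw [hℓ.apply_eq_sum hac, hℓ.apply_eq_sum hc, map_sum, LinearMap.sum_apply, Finset.smul_sum]
  refine Finset.sum_congr rfl fun y _ => ?_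
  rw [Pi.smul_apply, smul_eq_mul, hI_mul _ _ a ha _ (hc y), map_zsmul, ← hact_mul, map_zsmul,
    LinearMap.smul_apply, Int.negOnePow_smul_negOnePow_smul, Int.negOnePow_smul_negOnePow_smul]
  exact Int.negOnePow_smul_eq_of_even ⟨0, by ring⟩ _

theorem PhiChar.sum_twist_eq_neg_apply (hℓ : PhiChar ℛ act I deg ℓ g) (k : ℤ) {x : B} {r : B → R}
    (hr : ∀ y, r y ∈ ℛ (deg x - deg y - 1)) :
    ∑ y, (Int.negOnePow (deg y - k) : ℤ) •
        act (g y) ((Int.negOnePow (deg x * deg y + deg x + 1) : ℤ) • I (r y)) =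
      -((Int.negOnePow (k + deg x) : ℤ) • ℓ r) := by
  rw [hℓ.apply_eq_sum (j := deg x - 1) fun y => by rw [sub_right_comm]; exact hr y,
    Finset.smul_sum, ← Finset.sum_neg_distrib]
  refine Finset.sum_congr rfl fun y _ => ?_
  rw [map_zsmul, Int.negOnePow_smul_negOnePow_smul, Int.negOnePow_smul_negOnePow_smul]
  exact Int.negOnePow_smul_eq_neg_of_odd ⟨deg y - k, by ring⟩ _

/-- The differential `d` of `C^*` in the coordinates of `PhiChar`: `|g y| = deg y - k` and
`n_{y,x} = (-1)^{|x||y|+|x|+1} I (m x y)`. -/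
def twistedCochainDiff (dF : F →ₗ[A] F) (act : F →ₗ[A] R →ₗ[A] F) (I : R →ₗ[A] R)
    (deg : B → ℤ) (m : B → B → R) (k : ℤ) (g : B → F) : B → F :=
  fun x => dF (g x) + ∑ y : B, (Int.negOnePow (deg y - k) : ℤ) •
    act (g y) ((Int.negOnePow (deg x * deg y + deg x + 1) : ℤ) • I (m x y))

theorem PhiChar.differential [GradedRing ℛ] {d : R →ₗ[A] R} {dF : F →ₗ[A] F}
    {m : B → B → R} {dM : (B → R) →ₗ[A] (B → R)}
    (hd_mem : ∀ i : ℤ, ∀ a ∈ ℛ i, d a ∈ ℛ (i - 1))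
    (hI_d : ∀ a : R, I (d a) = d (I a))
    (hI_mul : ∀ (i j : ℤ), ∀ a ∈ ℛ i, ∀ b ∈ ℛ j,
      I (a * b) = (Int.negOnePow (i * j) : ℤ) • (I b * I a))
    (hact_mul : ∀ (f : F) (a b : R), act (act f a) b = act f (a * b))
    (hact_leibniz : ∀ i : ℤ, ∀ f ∈ ℱ i, ∀ a : R,
      dF (act f a) = act (dF f) a + (Int.negOnePow i : ℤ) • act f (d a))
    (hm_mem : ∀ x y : B, m x y ∈ ℛ (deg x - deg y - 1))
    (hdM : ∀ i : ℤ, ∀ a ∈ ℛ i, ∀ x : B,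
      dM (Pi.single x a) = Pi.single x (d a) +
        (Int.negOnePow i : ℤ) • (fun y : B => a * m x y))
    (hℓ : PhiChar ℛ act I deg ℓ g) {k : ℤ}
    (hg : ∀ y, g y ∈ ℱ (deg y - k)) :
    PhiChar ℛ act I deg (dF ∘ₗ ℓ - (Int.negOnePow k : ℤ) • (ℓ ∘ₗ dM))
      (twistedCochainDiff dF act I deg m k g) := by
  intro i a ha x
  have hdFℓ : dF (ℓ (Pi.single x a)) =
      (Int.negOnePow (deg x + i * deg x) : ℤ) • act (dF (g x)) (I a) +
        (Int.negOnePow (k + i * deg x) : ℤ) • act (g x) (I (d a)) := by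
    rw [hℓ i a ha x, map_zsmul, hact_leibniz _ _ (hg x), ← hI_d, smul_add,
      Int.negOnePow_smul_negOnePow_smul]
    congr 1
    exact Int.negOnePow_smul_eq_of_even ⟨deg x - k, by ring⟩ _
  have hℓdM : (Int.negOnePow k : ℤ) • ℓ (dM (Pi.single x a)) =
      (Int.negOnePow (k + i * deg x) : ℤ) • act (g x) (I (d a)) +
        (Int.negOnePow (k + i * deg x) : ℤ) • act (ℓ (m x)) (I a) := by
    have hrow : ∀ y, m x y ∈ ℛ (deg x - 1 - deg y) := fun y => by
      rw [sub_right_comm]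
      exact hm_mem x y
    rw [hdM i a ha x, map_add, map_zsmul, hℓ _ _ (hd_mem i a ha) x,
      show (fun y => a * m x y) = a • m x from rfl, hℓ.apply_smul hI_mul hact_mul ha hrow,
      smul_add, Int.negOnePow_smul_negOnePow_smul, Int.negOnePow_smul_negOnePow_smul,
      Int.negOnePow_smul_negOnePow_smul]
    congr 1
    · exact Int.negOnePow_smul_eq_of_even ⟨0, by ring⟩ _
    · exact Int.negOnePow_smul_eq_of_even ⟨0, by ring⟩ _
  simp only [LinearMap.sub_apply, LinearMap.comp_apply, LinearMap.smul_apply,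
    twistedCochainDiff]
  rw [hdFℓ, hℓdM, hℓ.sum_twist_eq_neg_apply k (hm_mem x), map_add, map_neg, map_zsmul,
    LinearMap.add_apply, LinearMap.neg_apply, LinearMap.smul_apply, smul_add, smul_neg,
    Int.negOnePow_smul_negOnePow_smul,
    Int.negOnePow_smul_eq_of_even (m := deg x + i * deg x + (k + deg x)) (n := k + i * deg x)
      ⟨deg x, by ring⟩]
  abel

end

theorem statement15_general
    {A : Type*} [CommRing A] {R : Type*} [Ring R] [Algebra A R]
    (ℛ : ℤ → Submodule A R) [GradedRing ℛ]
    (d : R →ₗ[A] R)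
    (hd_mem : ∀ i : ℤ, ∀ a ∈ ℛ i, d a ∈ ℛ (i - 1))
    (I : R →ₗ[A] R)
    (hI_one : I 1 = 1)
    (hI_deg : ∀ i : ℤ, ∀ a ∈ ℛ i, I a ∈ ℛ i)
    (hI_d : ∀ a : R, I (d a) = d (I a))
    (hI_mul : ∀ (i j : ℤ), ∀ a ∈ ℛ i, ∀ b ∈ ℛ j,
      I (a * b) = (Int.negOnePow (i * j) : ℤ) • (I b * I a))
    {F : Type*} [AddCommGroup F] [Module A F]
    (ℱ : ℤ → Submodule A F)
    (dF : F →ₗ[A] F)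
    (act : F →ₗ[A] R →ₗ[A] F)
    (hact_one : ∀ f : F, act f 1 = f)
    (hact_mul : ∀ (f : F) (a b : R), act (act f a) b = act f (a * b))
    (hact_mem : ∀ (i j : ℤ), ∀ f ∈ ℱ i, ∀ a ∈ ℛ j, act f a ∈ ℱ (i + j))
    (hact_leibniz : ∀ i : ℤ, ∀ f ∈ ℱ i, ∀ a : R,
      dF (act f a) = act (dF f) a + (Int.negOnePow i : ℤ) • act f (d a))
    {B : Type*} [Fintype B] [DecidableEq B]
    (deg : B → ℤ)
    (m : B → B → R)
    (hm_mem : ∀ x y : B, m x y ∈ ℛ (deg x - deg y - 1))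
    (dM : (B → R) →ₗ[A] (B → R))
    (hdM : ∀ i : ℤ, ∀ a ∈ ℛ i, ∀ x : B,
      dM (Pi.single x a) = Pi.single x (d a) +
        (Int.negOnePow i : ℤ) • (fun y : B => a * m x y)) :
    ((∀ j : ℤ, ∀ f ∈ ℱ j, act f (I 1) = f) ∧
      (∀ (i₁ i₂ j : ℤ), ∀ a ∈ ℛ i₁, ∀ b ∈ ℛ i₂, ∀ f ∈ ℱ j,
        (Int.negOnePow (i₁ * (i₂ + j) + i₂ * j) : ℤ) • act (act f (I b)) (I a) =
          (Int.negOnePow ((i₁ + i₂) * j) : ℤ) • act f (I (a * b))) ∧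
      (∀ (i j : ℤ), ∀ a ∈ ℛ i, ∀ f ∈ ℱ j,
        dF ((Int.negOnePow (i * j) : ℤ) • act f (I a)) =
          (Int.negOnePow ((i - 1) * j) : ℤ) • act f (I (d a)) +
            (Int.negOnePow (i + i * (j - 1)) : ℤ) • act (dF f) (I a))) ∧
    ∀ k : ℤ,
      (∀ g : B → F, (∀ y : B, g y ∈ ℱ (deg y - k)) →
        ∀ ℓ : (B → R) →ₗ[A] F, PhiChar ℛ act I deg ℓ g →
          (∀ i : ℤ, ∀ c : B → R, (∀ x : B, c x ∈ ℛ (i - deg x)) → ℓ c ∈ ℱ (i - k)) ∧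
          (∀ i : ℤ, ∀ a ∈ ℛ i, ∀ j : ℤ, ∀ c : B → R, (∀ x : B, c x ∈ ℛ (j - deg x)) →
            ℓ (a • c) = (Int.negOnePow (i * j) : ℤ) • act (ℓ c) (I a))) ∧
      (∀ g₁ g₂ : B → F, (∀ y : B, g₁ y ∈ ℱ (deg y - k)) →
        (∀ y : B, g₂ y ∈ ℱ (deg y - k)) →
        ∀ ℓ : (B → R) →ₗ[A] F,
          PhiChar ℛ act I deg ℓ g₁ → PhiChar ℛ act I deg ℓ g₂ → g₁ = g₂) ∧
      (∀ ℓ : (B → R) →ₗ[A] F,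
        (∀ i : ℤ, ∀ c : B → R, (∀ x : B, c x ∈ ℛ (i - deg x)) → ℓ c ∈ ℱ (i - k)) →
        (∀ i : ℤ, ∀ a ∈ ℛ i, ∀ j : ℤ, ∀ c : B → R, (∀ x : B, c x ∈ ℛ (j - deg x)) →
          ℓ (a • c) = (Int.negOnePow (i * j) : ℤ) • act (ℓ c) (I a)) →
        ∃ g : B → F, (∀ y : B, g y ∈ ℱ (deg y - k)) ∧ PhiChar ℛ act I deg ℓ g) ∧
      (∀ g : B → F, (∀ y : B, g y ∈ ℱ (deg y - k)) →
        ∀ ℓ ℓ' : (B → R) →ₗ[A] F, PhiChar ℛ act I deg ℓ g →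
          PhiChar ℛ act I deg ℓ'
            (fun x => dF (g x) + ∑ y : B, (Int.negOnePow (deg y - k) : ℤ) •
              act (g y) ((Int.negOnePow (deg x * deg y + deg x + 1) : ℤ) • I (m x y))) →
          ∀ c : B → R, dF (ℓ c) - (Int.negOnePow k : ℤ) • ℓ (dM c) = ℓ' c) := by
  refine ⟨⟨fun _ f _ => by rw [hI_one, hact_one],
      fun i₁ i₂ j a ha b hb f _ => twistedLeftAction_mul hI_mul hact_mul j ha hb f,
      fun i j a _ f hf => twistedLeftAction_leibniz hI_d hact_leibniz i a hf⟩,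
    fun k => ⟨?_, ?_, ?_, ?_⟩⟩
  · exact fun g hg ℓ hℓ => ⟨fun i c hc => hℓ.apply_mem hI_deg hact_mem hg hc,
      fun i a ha j c hc => hℓ.apply_smul hI_mul hact_mul ha hc⟩
  · intro g₁ g₂ _ _ ℓ h₁ h₂
    funext x
    rw [h₁.eq_negOnePow_smul_apply_single_one hI_one hact_one,
      h₂.eq_negOnePow_smul_apply_single_one hI_one hact_one]
  · exact fun ℓ hgrad hlin => ⟨_, fun y =>
      zsmul_mem (hgrad _ _ (Pi.single_one_mem_graded ℛ deg y)) _, PhiChar.of_map_smul hlin⟩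
  · intro g hg ℓ ℓ' hℓ hℓ' c
    exact LinearMap.congr_fun ((hℓ.differential hd_mem hI_d hI_mul hact_mul hact_leibniz hm_mem
      hdM hg).ext hℓ') c

/-- Let `I` be a graded anti-automorphism of the DGA `R` with `I 1 = 1`, and let
`F` be a DG right `R`-module; `F^left` denotes `F` with the left action
`a · f = (-1)^{|a||f|} f · I(a)`. Then: `F^left` is a DG left `R`-module; and for each `k : ℤ`
the map `Φ` (encoded by `PhiChar`) identifies the degree-`k` part of the cohomological twisted
complex `C^*` (functions `g : B → F` with `g y ∈ ℱ (|y| - k)`) bijectively with the degree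
`-k` part of `Hom_R(R ⊗ C, F^left)` (maps `ℓ` satisfying the grading and graded `R`-linearity
conditions), and intertwines the differentials: `δ ∘ Φ = Φ ∘ d`. -/
theorem statement15
    {A : Type*} [CommRing A] {R : Type*} [Ring R] [Algebra A R]
    (ℛ : ℤ → Submodule A R) [GradedRing ℛ]
    (d : R →ₗ[A] R)
    (hd_mem : ∀ i : ℤ, ∀ a ∈ ℛ i, d a ∈ ℛ (i - 1))
    (hd_sq : ∀ a : R, d (d a) = 0)
    (hd_leibniz : ∀ i : ℤ, ∀ a ∈ ℛ i, ∀ b : R,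
      d (a * b) = d a * b + (Int.negOnePow i : ℤ) • (a * d b))
    (I : R →ₗ[A] R)
    (hI_one : I 1 = 1)
    (hI_deg : ∀ i : ℤ, ∀ a ∈ ℛ i, I a ∈ ℛ i)
    (hI_d : ∀ a : R, I (d a) = d (I a))
    (hI_mul : ∀ (i j : ℤ), ∀ a ∈ ℛ i, ∀ b ∈ ℛ j,
      I (a * b) = (Int.negOnePow (i * j) : ℤ) • (I b * I a))
    {F : Type*} [AddCommGroup F] [Module A F]
    (ℱ : ℤ → Submodule A F) [DirectSum.Decomposition ℱ]
    (dF : F →ₗ[A] F)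
    (hdF_mem : ∀ i : ℤ, ∀ f ∈ ℱ i, dF f ∈ ℱ (i - 1))
    (hdF_sq : ∀ f : F, dF (dF f) = 0)
    (act : F →ₗ[A] R →ₗ[A] F)
    (hact_one : ∀ f : F, act f 1 = f)
    (hact_mul : ∀ (f : F) (a b : R), act (act f a) b = act f (a * b))
    (hact_mem : ∀ (i j : ℤ), ∀ f ∈ ℱ i, ∀ a ∈ ℛ j, act f a ∈ ℱ (i + j))
    (hact_leibniz : ∀ i : ℤ, ∀ f ∈ ℱ i, ∀ a : R,
      dF (act f a) = act (dF f) a + (Int.negOnePow i : ℤ) • act f (d a))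
    {B : Type*} [Fintype B] [DecidableEq B]
    (deg : B → ℤ) (hdeg : ∀ x : B, 0 ≤ deg x)
    (m : B → B → R)
    (hm_mem : ∀ x y : B, m x y ∈ ℛ (deg x - deg y - 1))
    (hm_zero : ∀ x y : B, ¬ deg y < deg x → m x y = 0)
    (hm_mc : ∀ x y : B, d (m x y) =
      ∑ z : B, (Int.negOnePow (deg x - deg z) : ℤ) • (m x z * m z y))
    (dM : (B → R) →ₗ[A] (B → R))
    (hdM : ∀ i : ℤ, ∀ a ∈ ℛ i, ∀ x : B,
      dM (Pi.single x a) = Pi.single x (d a) +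
        (Int.negOnePow i : ℤ) • (fun y : B => a * m x y)) :
    ((∀ j : ℤ, ∀ f ∈ ℱ j, act f (I 1) = f) ∧
      (∀ (i₁ i₂ j : ℤ), ∀ a ∈ ℛ i₁, ∀ b ∈ ℛ i₂, ∀ f ∈ ℱ j,
        (Int.negOnePow (i₁ * (i₂ + j) + i₂ * j) : ℤ) • act (act f (I b)) (I a) =
          (Int.negOnePow ((i₁ + i₂) * j) : ℤ) • act f (I (a * b))) ∧
      (∀ (i j : ℤ), ∀ a ∈ ℛ i, ∀ f ∈ ℱ j,
        dF ((Int.negOnePow (i * j) : ℤ) • act f (I a)) =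
          (Int.negOnePow ((i - 1) * j) : ℤ) • act f (I (d a)) +
            (Int.negOnePow (i + i * (j - 1)) : ℤ) • act (dF f) (I a))) ∧
    ∀ k : ℤ,
      (∀ g : B → F, (∀ y : B, g y ∈ ℱ (deg y - k)) →
        ∀ ℓ : (B → R) →ₗ[A] F, PhiChar ℛ act I deg ℓ g →
          (∀ i : ℤ, ∀ c : B → R, (∀ x : B, c x ∈ ℛ (i - deg x)) → ℓ c ∈ ℱ (i - k)) ∧
          (∀ i : ℤ, ∀ a ∈ ℛ i, ∀ j : ℤ, ∀ c : B → R, (∀ x : B, c x ∈ ℛ (j - deg x)) →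
            ℓ (a • c) = (Int.negOnePow (i * j) : ℤ) • act (ℓ c) (I a))) ∧
      (∀ g₁ g₂ : B → F, (∀ y : B, g₁ y ∈ ℱ (deg y - k)) →
        (∀ y : B, g₂ y ∈ ℱ (deg y - k)) →
        ∀ ℓ : (B → R) →ₗ[A] F,
          PhiChar ℛ act I deg ℓ g₁ → PhiChar ℛ act I deg ℓ g₂ → g₁ = g₂) ∧
      (∀ ℓ : (B → R) →ₗ[A] F,
        (∀ i : ℤ, ∀ c : B → R, (∀ x : B, c x ∈ ℛ (i - deg x)) → ℓ c ∈ ℱ (i - k)) →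
        (∀ i : ℤ, ∀ a ∈ ℛ i, ∀ j : ℤ, ∀ c : B → R, (∀ x : B, c x ∈ ℛ (j - deg x)) →
          ℓ (a • c) = (Int.negOnePow (i * j) : ℤ) • act (ℓ c) (I a)) →
        ∃ g : B → F, (∀ y : B, g y ∈ ℱ (deg y - k)) ∧ PhiChar ℛ act I deg ℓ g) ∧
      (∀ g : B → F, (∀ y : B, g y ∈ ℱ (deg y - k)) →
        ∀ ℓ ℓ' : (B → R) →ₗ[A] F, PhiChar ℛ act I deg ℓ g →
          PhiChar ℛ act I deg ℓ'
            (fun x => dF (g x) + ∑ y : B, (Int.negOnePow (deg y - k) : ℤ) •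
              act (g y) ((Int.negOnePow (deg x * deg y + deg x + 1) : ℤ) • I (m x y))) →
          ∀ c : B → R, dF (ℓ c) - (Int.negOnePow k : ℤ) • ℓ (dM c) = ℓ' c) :=
  statement15_general ℛ d hd_mem I hI_one hI_deg hI_d hI_mul ℱ dF act hact_one hact_mul hact_mem
    hact_leibniz deg m hm_mem dM hdM
end

section
/- Let R be a DGA over A, F a DG right R-module, C_• a free graded A-module with finite basis B (degrees ≥ 0), (m_{x,y}) a twisting cocycle for (R, C_•), and M := R⊗_A C_• the DG left R-module with twisted differential ∂_M(a⊗x) = ∂a⊗x + (−1)^{|a|} Σ_{y∈B} (a m_{x,y})⊗y and left action b·(a⊗x) = (ba)⊗x. Form F ⊗_R M, the quotient of F ⊗_A M by the relations (α·a) ⊗ ξ = α ⊗ (a·ξ), graded by |α⊗ξ| = |α| + |ξ|. Then the map ∂(α⊗ξ) = ∂α⊗ξ + (−1)^{|α|} α⊗∂_M ξ descends to a well-defined degree −1 differential on F ⊗_R M, and the A-linear map C_*(C_•, F) → F ⊗_R M sending α⊗x ↦ α ⊗ (1⊗x) is an isomorphism of chain complexes from the twisted complex onto F ⊗_R M. 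-/
/-!
Sending `α ⊗ c` to `(α · c_x)_x` identifies the balanced tensor product `F ⊗_R R^B` with `F^B`,
with inverse `c ↦ ∑ₓ c_x ⊗ e_x` (balancedness moves the coefficients of `c` into `F`). The
differential on `F ⊗_R M` is the twisted differential `D` transported along this isomorphism,
so it squares to zero because `D` does, which is the twisting cocycle equation. That it is given
by the tensor formula `∂α ⊗ ξ + (-1)^|α| α ⊗ ∂_M ξ` is checked on `α ⊗ a e_x` for homogeneous
`α` and `a`, using the Leibniz rule for the action `α · a`.
-/

universe u v w t

/-- `(T, τ)` is a balanced tensor product over the ring `R` of the right `R`-module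
`(F, actF)` and the left `R`-module `(N, actN)` (actions given as explicit functions):
`τ` is biadditive and balanced, its image generates `T`, and every biadditive balanced map
factors uniquely through `τ` by an additive map. -/
structure IsBalancedTensor (R : Type u) [Ring R]
    (F : Type v) [AddCommGroup F] (actF : F → R → F)
    (N : Type w) [AddCommGroup N] (actN : R → N → N)
    (T : Type t) [AddCommGroup T] (τ : F → N → T) : Prop where
  add_left : ∀ (f g : F) (n : N), τ (f + g) n = τ f n + τ g n
  add_right : ∀ (f : F) (n n' : N), τ f (n + n') = τ f n + τ f n'
  balanced : ∀ (f : F) (a : R) (n : N), τ (actF f a) n = τ f (actN a n)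
  span : AddSubgroup.closure {x : T | ∃ f n, τ f n = x} = ⊤
  lift : ∀ (P : Type (max u v w t)) [AddCommGroup P] (β : F → N → P),
    (∀ (f g : F) (n : N), β (f + g) n = β f n + β g n) →
    (∀ (f : F) (n n' : N), β f (n + n') = β f n + β f n') →
    (∀ (f : F) (a : R) (n : N), β (actF f a) n = β f (actN a n)) →
    ∃! φ : T →+ P, ∀ f n, φ (τ f n) = β f n

theorem Int.negOnePow_smul_negOnePow_smul_s16 {M : Type*} [AddCommGroup M] (k : ℤ) (v : M) :
    (k.negOnePow : ℤ) • (k.negOnePow : ℤ) • v = v := by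
  rw [smul_smul, ← Units.val_mul, Int.units_mul_self, Units.val_one, one_smul]

theorem Int.negOnePow_smul_negOnePow_add_smul {M : Type*} [AddCommGroup M] (k l : ℤ) (v : M) :
    (k.negOnePow : ℤ) • ((k + l).negOnePow : ℤ) • v = (l.negOnePow : ℤ) • v := by
  rw [Int.negOnePow_add, Units.val_mul, mul_smul, Int.negOnePow_smul_negOnePow_smul_s16]

theorem Int.negOnePow_sub_one_smul {M : Type*} [AddCommGroup M] (k : ℤ) (v : M) :
    ((k - 1).negOnePow : ℤ) • v = -((k.negOnePow : ℤ) • v) := by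
  rw [Int.negOnePow_sub, Int.negOnePow_one, Units.val_mul, Units.val_neg, Units.val_one,
    mul_neg_one, neg_smul]

theorem AddMonoidHom.pi_ext_of_decomposition {ι σ B M N : Type*} [DecidableEq ι]
    [AddCommMonoid M] [SetLike σ M] [AddSubmonoidClass σ M] (ℳ : ι → σ)
    [DirectSum.Decomposition ℳ] [Finite B] [DecidableEq B] [AddCommMonoid N]
    {φ ψ : (B → M) →+ N} (h : ∀ i, ∀ a ∈ ℳ i, ∀ x, φ (Pi.single x a) = ψ (Pi.single x a)) :
    φ = ψ :=
  AddMonoidHom.functions_ext _ _ _ fun x a =>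
    DirectSum.Decomposition.inductionOn ℳ
      (motive := fun a => φ (Pi.single x a) = ψ (Pi.single x a))
      (by simp) (fun a => h _ _ a.2 x)
      (fun a a' ha ha' => by simp only [Pi.single_add, map_add, ha, ha']) a

namespace IsBalancedTensor

section General

variable {R : Type u} [Ring R] {F : Type v} [AddCommGroup F] {actF : F → R → F}
  {N : Type w} [AddCommGroup N] {actN : R → N → N} {T : Type t} [AddCommGroup T]
  {τ : F → N → T}

theorem addMonoidHom_ext (hT : IsBalancedTensor R F actF N actN T τ) {P : Type*} [AddMonoid P]
    {φ ψ : T →+ P} (h : ∀ f n, φ (τ f n) = ψ (τ f n)) : φ = ψ :=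
  AddMonoidHom.eq_of_eqOn_dense hT.span fun _ ⟨f, n, hfn⟩ => hfn ▸ h f n

variable (hT : IsBalancedTensor R F actF N actN T τ)

def tmulLeft (n : N) : F →+ T := AddMonoidHom.mk' (τ · n) fun f g => hT.add_left f g n

def tmulRight (f : F) : N →+ T := AddMonoidHom.mk' (τ f) (hT.add_right f)

@[simp] theorem tmulLeft_apply (n : N) (f : F) : hT.tmulLeft n f = τ f n := rfl

@[simp] theorem tmulRight_apply (f : F) (n : N) : hT.tmulRight f n = τ f n := rfl

end General

section Pi

variable {A : Type*} [CommRing A] {R : Type u} [Ring R] [Algebra A R]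
  {F : Type v} [AddCommGroup F] [Module A F] {act : F →ₗ[A] R →ₗ[A] F}
  {B : Type w} {T : Type t} [AddCommGroup T] {τ : F → (B → R) → T}

theorem exists_tmul_eq_act
    (hT : IsBalancedTensor R F (fun f a => act f a) (B → R) (fun a c x => a * c x) T τ)
    (hact_mul : ∀ (f : F) (a b : R), act (act f a) b = act f (a * b)) :
    ∃ φ : T →+ (B → F), ∀ f c, φ (τ f c) = fun x => act f (c x) := by
  -- `IsBalancedTensor.lift` only reaches the universe `max u v (max w u) t`
  obtain ⟨φ, hφ, -⟩ := hT.lift (ULift.{max u t} (B → F))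
    (fun f c => ULift.up fun x => act f (c x)) (fun f g c => by ext; simp)
    (fun f c c' => by ext; simp) (fun f a c => by ext; simp [hact_mul])
  exact ⟨(AddEquiv.ulift : ULift (B → F) ≃+ (B → F)).toAddMonoidHom.comp φ,
    fun f c => congrArg ULift.down (hφ f c)⟩

theorem tmul_act_single [DecidableEq B]
    (hT : IsBalancedTensor R F (fun f a => act f a) (B → R) (fun a c x => a * c x) T τ)
    (f : F) (a : R) (x : B) : τ (act f a) (Pi.single x 1) = τ f (Pi.single x a) := by
  rw [hT.balanced]
  congr 1
  ext y
  by_cases h : y = x <;> simp [h]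

variable (hT : IsBalancedTensor R F (fun f a => act f a) (B → R) (fun a c x => a * c x) T τ)
  (hact_mul : ∀ (f : F) (a b : R), act (act f a) b = act f (a * b))

noncomputable def toPi : T →+ (B → F) :=
  (hT.exists_tmul_eq_act hact_mul).choose

theorem toPi_tmul (f : F) (c : B → R) : hT.toPi hact_mul (τ f c) = fun x => act f (c x) :=
  (hT.exists_tmul_eq_act hact_mul).choose_spec f c

variable [Fintype B] [DecidableEq B]

def ofPi : (B → F) →+ T := ∑ x, (hT.tmulLeft (Pi.single x 1)).comp (Pi.evalAddMonoidHom _ x)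

theorem ofPi_apply (c : B → F) : hT.ofPi c = ∑ x, τ (c x) (Pi.single x 1) := by
  simp [ofPi]

theorem ofPi_single (f : F) (x : B) : hT.ofPi (Pi.single x f) = τ f (Pi.single x 1) := by
  rw [ofPi_apply, Finset.sum_eq_single_of_mem x (Finset.mem_univ x) fun y _ hy => by
    rw [Pi.single_eq_of_ne hy, ← tmulLeft_apply hT, map_zero], Pi.single_eq_same]

theorem ofPi_act (f : F) (c : B → R) : hT.ofPi (fun x => act f (c x)) = τ f c :=
  calc hT.ofPi (fun x => act f (c x)) = ∑ x, hT.tmulRight f (Pi.single x (c x)) := by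
        simp only [ofPi_apply, hT.tmul_act_single, tmulRight_apply]
    _ = τ f c := by rw [← map_sum, Finset.univ_sum_single, tmulRight_apply]

theorem toPi_comp_ofPi (hact_one : ∀ f : F, act f 1 = f) :
    (hT.toPi hact_mul).comp hT.ofPi = AddMonoidHom.id (B → F) :=
  AddMonoidHom.functions_ext _ _ _ fun x f => by
    rw [AddMonoidHom.comp_apply, ofPi_single, toPi_tmul, AddMonoidHom.id_apply]
    ext y
    rw [Pi.apply_single (fun _ => act f) (fun _ => map_zero _), hact_one]

theorem ofPi_comp_toPi : hT.ofPi.comp (hT.toPi hact_mul) = AddMonoidHom.id T :=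
  hT.addMonoidHom_ext fun f c => by
    rw [AddMonoidHom.comp_apply, toPi_tmul, ofPi_act, AddMonoidHom.id_apply]

end Pi

end IsBalancedTensor

section TwistedComplex

variable {A R F B : Type*} [CommRing A] [Ring R] [Algebra A R] [AddCommGroup F] [Module A F]
  {ℛ : ℤ → Submodule A R} {ℱ : ℤ → Submodule A F} {d : R →ₗ[A] R} {dF : F →ₗ[A] F}
  {act : F →ₗ[A] R →ₗ[A] F} [DecidableEq B] {m : B → B → R}
  {D : (B → F) →ₗ[A] (B → F)}

theorem twisted_apply_single_act
    (hact_mul : ∀ (f : F) (a b : R), act (act f a) b = act f (a * b))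
    (hact_mem : ∀ (i j : ℤ), ∀ f ∈ ℱ i, ∀ a ∈ ℛ j, act f a ∈ ℱ (i + j))
    (hact_leibniz : ∀ i : ℤ, ∀ f ∈ ℱ i, ∀ a : R,
      dF (act f a) = act (dF f) a + (Int.negOnePow i : ℤ) • act f (d a))
    (hD : ∀ i : ℤ, ∀ f ∈ ℱ i, ∀ x : B,
      D (Pi.single x f) = Pi.single x (dF f) +
        (Int.negOnePow i : ℤ) • (fun y : B => act f (m x y)))
    {i j : ℤ} {f : F} (hf : f ∈ ℱ i) {a : R} (ha : a ∈ ℛ j) (x : B) :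
    D (Pi.single x (act f a)) = Pi.single x (act (dF f) a) +
      (i.negOnePow : ℤ) • Pi.single x (act f (d a)) +
        ((i + j).negOnePow : ℤ) • fun y => act f (a * m x y) := by
  rw [hD (i + j) _ (hact_mem i j f hf a ha) x, hact_leibniz i f hf, Pi.single_add,
    Pi.single_smul]
  simp only [hact_mul]

theorem twisted_sq_single [Fintype B]
    (hdF_mem : ∀ i : ℤ, ∀ f ∈ ℱ i, dF f ∈ ℱ (i - 1))
    (hdF_sq : ∀ f : F, dF (dF f) = 0)
    (hact_mul : ∀ (f : F) (a b : R), act (act f a) b = act f (a * b))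
    (hact_mem : ∀ (i j : ℤ), ∀ f ∈ ℱ i, ∀ a ∈ ℛ j, act f a ∈ ℱ (i + j))
    (hact_leibniz : ∀ i : ℤ, ∀ f ∈ ℱ i, ∀ a : R,
      dF (act f a) = act (dF f) a + (Int.negOnePow i : ℤ) • act f (d a))
    (deg : B → ℤ) (hm_mem : ∀ x y : B, m x y ∈ ℛ (deg x - deg y - 1))
    (hm_mc : ∀ x y : B, d (m x y) =
      ∑ z : B, (Int.negOnePow (deg x - deg z) : ℤ) • (m x z * m z y))
    (hD : ∀ i : ℤ, ∀ f ∈ ℱ i, ∀ x : B,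
      D (Pi.single x f) = Pi.single x (dF f) +
        (Int.negOnePow i : ℤ) • (fun y : B => act f (m x y)))
    {i : ℤ} {f : F} (hf : f ∈ ℱ i) (x : B) :
    D (D (Pi.single x f)) = 0 := by
  have hD_dF : D (Pi.single x (dF f)) = -((i.negOnePow : ℤ) • fun y => act (dF f) (m x y)) := by
    rw [hD (i - 1) _ (hdF_mem i f hf) x, hdF_sq, Pi.single_zero, zero_add,
      Int.negOnePow_sub_one_smul]
  have hD_row : D (fun y => act f (m x y)) = (fun y => act (dF f) (m x y)) +
      (i.negOnePow : ℤ) • (fun y => act f (d (m x y))) +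
      ∑ y, ((i + (deg x - deg y - 1)).negOnePow : ℤ) • fun z => act f (m x y * m y z) := by
    conv_lhs => rw [← Finset.univ_sum_single (fun y => act f (m x y)), map_sum]
    simp only [twisted_apply_single_act hact_mul hact_mem hact_leibniz hD hf (hm_mem x _)]
    rw [Finset.sum_add_distrib, Finset.sum_add_distrib, ← Finset.smul_sum,
      Finset.univ_sum_single, Finset.univ_sum_single (fun y => act f (d (m x y)))]
  rw [hD i f hf x, map_add, map_zsmul, hD_dF, hD_row, smul_add, smul_add, Finset.smul_sum,
    Int.negOnePow_smul_negOnePow_smul_s16, add_assoc, neg_add_cancel_left]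
  simp only [Int.negOnePow_smul_negOnePow_add_smul, Int.negOnePow_sub_one_smul]
  ext w
  simp only [Pi.add_apply, Finset.sum_apply, Pi.smul_apply, Pi.neg_apply, Pi.zero_apply, hm_mc,
    map_sum, map_zsmul, Finset.sum_neg_distrib, add_neg_cancel]

theorem twisted_sq [Fintype B] [DirectSum.Decomposition ℱ]
    (hdF_mem : ∀ i : ℤ, ∀ f ∈ ℱ i, dF f ∈ ℱ (i - 1))
    (hdF_sq : ∀ f : F, dF (dF f) = 0)
    (hact_mul : ∀ (f : F) (a b : R), act (act f a) b = act f (a * b))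
    (hact_mem : ∀ (i j : ℤ), ∀ f ∈ ℱ i, ∀ a ∈ ℛ j, act f a ∈ ℱ (i + j))
    (hact_leibniz : ∀ i : ℤ, ∀ f ∈ ℱ i, ∀ a : R,
      dF (act f a) = act (dF f) a + (Int.negOnePow i : ℤ) • act f (d a))
    (deg : B → ℤ) (hm_mem : ∀ x y : B, m x y ∈ ℛ (deg x - deg y - 1))
    (hm_mc : ∀ x y : B, d (m x y) =
      ∑ z : B, (Int.negOnePow (deg x - deg z) : ℤ) • (m x z * m z y))
    (hD : ∀ i : ℤ, ∀ f ∈ ℱ i, ∀ x : B,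
      D (Pi.single x f) = Pi.single x (dF f) +
        (Int.negOnePow i : ℤ) • (fun y : B => act f (m x y)))
    (c : B → F) : D (D c) = 0 :=
  DFunLike.congr_fun
    (AddMonoidHom.pi_ext_of_decomposition ℱ (φ := (D ∘ₗ D).toAddMonoidHom) (ψ := 0)
      fun _ _ hf x => twisted_sq_single hdF_mem hdF_sq hact_mul hact_mem hact_leibniz deg
        hm_mem hm_mc hD hf x) c

end TwistedComplex

theorem IsBalancedTensor.ofPi_twisted_act {A : Type*} [CommRing A] {R : Type u} [Ring R]
    [Algebra A R] {ℛ : ℤ → Submodule A R} [DirectSum.Decomposition ℛ] {d : R →ₗ[A] R}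
    {F : Type v} [AddCommGroup F] [Module A F] {ℱ : ℤ → Submodule A F} {dF : F →ₗ[A] F}
    {act : F →ₗ[A] R →ₗ[A] F}
    (hact_mul : ∀ (f : F) (a b : R), act (act f a) b = act f (a * b))
    (hact_mem : ∀ (i j : ℤ), ∀ f ∈ ℱ i, ∀ a ∈ ℛ j, act f a ∈ ℱ (i + j))
    (hact_leibniz : ∀ i : ℤ, ∀ f ∈ ℱ i, ∀ a : R,
      dF (act f a) = act (dF f) a + (Int.negOnePow i : ℤ) • act f (d a))
    {B : Type w} [Fintype B] [DecidableEq B] {m : B → B → R}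
    {dM : (B → R) →ₗ[A] (B → R)}
    (hdM : ∀ i : ℤ, ∀ a ∈ ℛ i, ∀ x : B,
      dM (Pi.single x a) = Pi.single x (d a) +
        (Int.negOnePow i : ℤ) • (fun y : B => a * m x y))
    {D : (B → F) →ₗ[A] (B → F)}
    (hD : ∀ i : ℤ, ∀ f ∈ ℱ i, ∀ x : B,
      D (Pi.single x f) = Pi.single x (dF f) +
        (Int.negOnePow i : ℤ) • (fun y : B => act f (m x y)))
    {T : Type t} [AddCommGroup T] {τ : F → (B → R) → T}
    (hT : IsBalancedTensor R F (fun f a => act f a) (B → R) (fun a c x => a * c x) T τ)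
    {i : ℤ} {f : F} (hf : f ∈ ℱ i) (c : B → R) :
    hT.ofPi (D fun x => act f (c x)) = τ (dF f) c + (i.negOnePow : ℤ) • τ f (dM c) := by
  have hext : (hT.ofPi.comp D.toAddMonoidHom).comp ((act f).toAddMonoidHom.compLeft B) =
      hT.tmulRight (dF f) + (i.negOnePow : ℤ) • (hT.tmulRight f).comp dM.toAddMonoidHom := by
    refine AddMonoidHom.pi_ext_of_decomposition ℛ fun j a ha x => ?_
    have hsingle : (fun y => act f ((Pi.single x a : B → R) y)) = Pi.single x (act f a) :=
      funext (Pi.apply_single (fun _ => act f) (fun _ => map_zero _) x a)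
    change hT.ofPi (D fun y => act f ((Pi.single x a : B → R) y)) =
      τ (dF f) (Pi.single x a) + (i.negOnePow : ℤ) • τ f (dM (Pi.single x a))
    rw [hsingle, twisted_apply_single_act hact_mul hact_mem hact_leibniz hD hf ha, map_add,
      map_add, map_zsmul, map_zsmul, ofPi_single, ofPi_single, ofPi_act, hT.tmul_act_single,
      hT.tmul_act_single]
    rw [hdM j a ha x, hT.add_right, ← tmulRight_apply hT f (_ • _), map_zsmul, tmulRight_apply,
      smul_add, smul_smul, ← Units.val_mul, ← Int.negOnePow_add, add_assoc]
  exact DFunLike.congr_fun hext c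

theorem statement16_general
    {A : Type*} [CommRing A] {R : Type*} [Ring R] [Algebra A R]
    (ℛ : ℤ → Submodule A R) [GradedRing ℛ]
    (d : R →ₗ[A] R)
    {F : Type*} [AddCommGroup F] [Module A F]
    (ℱ : ℤ → Submodule A F) [DirectSum.Decomposition ℱ]
    (dF : F →ₗ[A] F)
    (hdF_mem : ∀ i : ℤ, ∀ f ∈ ℱ i, dF f ∈ ℱ (i - 1))
    (hdF_sq : ∀ f : F, dF (dF f) = 0)
    (act : F →ₗ[A] R →ₗ[A] F)
    (hact_one : ∀ f : F, act f 1 = f)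
    (hact_mul : ∀ (f : F) (a b : R), act (act f a) b = act f (a * b))
    (hact_mem : ∀ (i j : ℤ), ∀ f ∈ ℱ i, ∀ a ∈ ℛ j, act f a ∈ ℱ (i + j))
    (hact_leibniz : ∀ i : ℤ, ∀ f ∈ ℱ i, ∀ a : R,
      dF (act f a) = act (dF f) a + (Int.negOnePow i : ℤ) • act f (d a))
    {B : Type*} [Fintype B] [DecidableEq B]
    (deg : B → ℤ)
    (m : B → B → R)
    (hm_mem : ∀ x y : B, m x y ∈ ℛ (deg x - deg y - 1))
    (hm_mc : ∀ x y : B, d (m x y) =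
      ∑ z : B, (Int.negOnePow (deg x - deg z) : ℤ) • (m x z * m z y))
    (dM : (B → R) →ₗ[A] (B → R))
    (hdM : ∀ i : ℤ, ∀ a ∈ ℛ i, ∀ x : B,
      dM (Pi.single x a) = Pi.single x (d a) +
        (Int.negOnePow i : ℤ) • (fun y : B => a * m x y))
    (D : (B → F) →ₗ[A] (B → F))
    (hD : ∀ i : ℤ, ∀ f ∈ ℱ i, ∀ x : B,
      D (Pi.single x f) = Pi.single x (dF f) +
        (Int.negOnePow i : ℤ) • (fun y : B => act f (m x y)))
    {T : Type*} [AddCommGroup T] (τ : F → (B → R) → T)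
    (hT : IsBalancedTensor R F (fun f a => act f a) (B → R)
      (fun (a : R) (c : B → R) (x : B) => a * c x) T τ) :
    ∃ DT : T →+ T,
      (∀ s : T, DT (DT s) = 0) ∧
      (∀ i : ℤ, ∀ f ∈ ℱ i, ∀ c : B → R,
        DT (τ f c) = τ (dF f) c + (Int.negOnePow i : ℤ) • τ f (dM c)) ∧
      ∃ e : (B → F) ≃+ T,
        (∀ (f : F) (x : B), e (Pi.single x f) = τ f (Pi.single x (1 : R))) ∧
        ∀ c : B → F, e (D c) = DT (e c) := by
  let e : (B → F) ≃+ T := hT.ofPi.toAddEquiv (hT.toPi hact_mul)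
    (hT.toPi_comp_ofPi hact_mul hact_one) (hT.ofPi_comp_toPi hact_mul)
  have hD_sq : ∀ c, D (D c) = 0 :=
    twisted_sq hdF_mem hdF_sq hact_mul hact_mem hact_leibniz deg hm_mem hm_mc hD
  refine ⟨e.toAddMonoidHom.comp (D.toAddMonoidHom.comp e.symm.toAddMonoidHom), fun s => ?_,
    fun i f hf c => ?_, e, hT.ofPi_single, fun c => ?_⟩
  · simp [hD_sq]
  · change hT.ofPi (D (hT.toPi hact_mul (τ f c))) = _
    rw [hT.toPi_tmul hact_mul]
    exact hT.ofPi_twisted_act hact_mul hact_mem hact_leibniz hdM hD hf c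
  · simp

/-- Let `m` be a twisting cocycle for `(R, C)` and `M = R ⊗ C` (modelled as
`B → R`) the semi-free DG left `R`-module with twisted differential `dM` and pointwise left
multiplication, and let `F` be a DG right `R`-module with twisted complex `(B → F, D)`.
If `(T, τ)` is the balanced tensor product `F ⊗_R M`, then the tensor differential
`∂ (α ⊗ ξ) = ∂α ⊗ ξ + (-1)^{|α|} α ⊗ dM ξ` descends to a well-defined degree `-1`
differential `DT` on `T`, and `α ⊗ x ↦ α ⊗ (1 ⊗ x)` defines an isomorphism of chain
complexes from the twisted complex onto `(T, DT)`. -/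
theorem statement16
    {A : Type*} [CommRing A] {R : Type*} [Ring R] [Algebra A R]
    (ℛ : ℤ → Submodule A R) [GradedRing ℛ]
    (d : R →ₗ[A] R)
    (hd_mem : ∀ i : ℤ, ∀ a ∈ ℛ i, d a ∈ ℛ (i - 1))
    (hd_sq : ∀ a : R, d (d a) = 0)
    (hd_leibniz : ∀ i : ℤ, ∀ a ∈ ℛ i, ∀ b : R,
      d (a * b) = d a * b + (Int.negOnePow i : ℤ) • (a * d b))
    {F : Type*} [AddCommGroup F] [Module A F]
    (ℱ : ℤ → Submodule A F) [DirectSum.Decomposition ℱ]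
    (dF : F →ₗ[A] F)
    (hdF_mem : ∀ i : ℤ, ∀ f ∈ ℱ i, dF f ∈ ℱ (i - 1))
    (hdF_sq : ∀ f : F, dF (dF f) = 0)
    (act : F →ₗ[A] R →ₗ[A] F)
    (hact_one : ∀ f : F, act f 1 = f)
    (hact_mul : ∀ (f : F) (a b : R), act (act f a) b = act f (a * b))
    (hact_mem : ∀ (i j : ℤ), ∀ f ∈ ℱ i, ∀ a ∈ ℛ j, act f a ∈ ℱ (i + j))
    (hact_leibniz : ∀ i : ℤ, ∀ f ∈ ℱ i, ∀ a : R,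
      dF (act f a) = act (dF f) a + (Int.negOnePow i : ℤ) • act f (d a))
    {B : Type*} [Fintype B] [DecidableEq B]
    (deg : B → ℤ) (hdeg : ∀ x : B, 0 ≤ deg x)
    (m : B → B → R)
    (hm_mem : ∀ x y : B, m x y ∈ ℛ (deg x - deg y - 1))
    (hm_zero : ∀ x y : B, ¬ deg y < deg x → m x y = 0)
    (hm_mc : ∀ x y : B, d (m x y) =
      ∑ z : B, (Int.negOnePow (deg x - deg z) : ℤ) • (m x z * m z y))
    (dM : (B → R) →ₗ[A] (B → R))
    (hdM : ∀ i : ℤ, ∀ a ∈ ℛ i, ∀ x : B,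
      dM (Pi.single x a) = Pi.single x (d a) +
        (Int.negOnePow i : ℤ) • (fun y : B => a * m x y))
    (D : (B → F) →ₗ[A] (B → F))
    (hD : ∀ i : ℤ, ∀ f ∈ ℱ i, ∀ x : B,
      D (Pi.single x f) = Pi.single x (dF f) +
        (Int.negOnePow i : ℤ) • (fun y : B => act f (m x y)))
    {T : Type*} [AddCommGroup T] (τ : F → (B → R) → T)
    (hT : IsBalancedTensor R F (fun f a => act f a) (B → R)
      (fun (a : R) (c : B → R) (x : B) => a * c x) T τ) :
    ∃ DT : T →+ T,
      (∀ s : T, DT (DT s) = 0) ∧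
      (∀ i : ℤ, ∀ f ∈ ℱ i, ∀ c : B → R,
        DT (τ f c) = τ (dF f) c + (Int.negOnePow i : ℤ) • τ f (dM c)) ∧
      ∃ e : (B → F) ≃+ T,
        (∀ (f : F) (x : B), e (Pi.single x f) = τ f (Pi.single x (1 : R))) ∧
        ∀ c : B → F, e (D c) = DT (e c) :=
  statement16_general ℛ d ℱ dF hdF_mem hdF_sq act hact_one hact_mul hact_mem hact_leibniz deg m
    hm_mem hm_mc dM hdM D hD τ hT
end
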